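/- Suppose there exists an N ≥ 0 such that G(n) ≤ 0 for all n ≥ N. Then 𝓜 = ∪_{ω∈{0,1}^N} I_ω; in particular 𝓜 is a finite union of closed intervals. -/

import Mathlib

open MeasureTheory Filter Topology

/-- The limiting cumulative distribution function `F_ε(z)` of the approximation
coefficients, for a generalised α-Lüroth expansion determined by the sequence
`t` (1-indexed, `t 1 = 1`) and the sign sequence `ε` (0-indexed: `ε n` is the
paper's `ε_{n+1}`).  Here `a_n = t n - t (n+1)` and the `n`-th summand is
`a_n` if `a_n / t_{n+1-ε_n} < z` and `t_{n+1-ε_n}·z` otherwise. -/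
noncomputable def F (t : ℕ → ℝ) (ε : ℕ → Fin 2) (z : ℝ) : ℝ :=
  ∑' n : ℕ,
    if (t (n + 1) - t (n + 2)) / t (n + 2 - (ε n : ℕ)) < z
    then t (n + 1) - t (n + 2)
    else t (n + 2 - (ε n : ℕ)) * z

/-- The expected average value `M_ε = ∫_[0,1] (1 - F_ε) dλ`. -/
noncomputable def Mavg (t : ℕ → ℝ) (ε : ℕ → Fin 2) : ℝ :=
  ∫ z in Set.Icc (0 : ℝ) 1, (1 - F t ε z)

/-- `t` generates an α-Lüroth partition: `(t_n)_{n ≥ 1}` is a strictly decreasing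
sequence in `(0,1]` with `t 1 = 1` tending to `0`. -/
structure IsLurothSeq (t : ℕ → ℝ) : Prop where
  t_one : t 1 = 1
  pos : ∀ n, 1 ≤ n → 0 < t n
  anti : ∀ n, 1 ≤ n → t (n + 1) < t n
  tendsto_zero : Tendsto t atTop (nhds 0)

/-- Concatenation `ωε` of a finite word `ω ∈ {0,1}^n` with a sequence `ε ∈ {0,1}^ℕ`. -/
def cat {n : ℕ} (w : Fin n → Fin 2) (ε : ℕ → Fin 2) : ℕ → Fin 2 :=
  fun k => if h : k < n then w ⟨k, h⟩ else ε (k - n)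

/-- The interval `I_ω = [M_{ω1̄}, M_{ω0̄}]`. -/
noncomputable def Iword (t : ℕ → ℝ) {n : ℕ} (w : Fin n → Fin 2) : Set ℝ :=
  Set.Icc (Mavg t (cat w fun _ => 1)) (Mavg t (cat w fun _ => 0))

/-- The set `𝓜 = {M_ε : ε ∈ {0,1}^ℕ}`. -/
noncomputable def calM (t : ℕ → ℝ) : Set ℝ :=
  Set.range (Mavg t)

/-- The quantity `g(k) = ∫_[0,1] (f_k^1 - f_k^0) dλ`. -/
noncomputable def gseq (t : ℕ → ℝ) (k : ℕ) : ℝ :=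
  if t (k + 1) / t k ≤ 1 / 2 then
    t k / 2 - t (k + 1) / 2 - (t (k + 1)) ^ 2 / (2 * t k)
  else
    (t k) ^ 2 / (2 * t (k + 1)) - (t (k + 1)) ^ 2 / (2 * t k)
      + 3 * t (k + 1) / 2 - 3 * t k / 2

/-- The gap/overlap function `G(n) = g(n+1) - Σ_{k ≥ n+2} g(k)`. -/
noncomputable def Gseq (t : ℕ → ℝ) (n : ℕ) : ℝ :=
  gseq t (n + 1) - ∑' k : ℕ, gseq t (n + 2 + k)

/-- The common length `I(n)` of the intervals `I_ω` for `ω ∈ {0,1}^n`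
(computed from the all-zeros word `ω = 0^n`). -/
noncomputable def Ilen (t : ℕ → ℝ) (n : ℕ) : ℝ :=
  Mavg t (fun _ => 0) - Mavg t (fun k => if k < n then 0 else 1)

/-- A Cantor set in `ℝ`: a nonempty compact set with empty interior and
no isolated points. -/
def IsCantorSet (S : Set ℝ) : Prop :=
  S.Nonempty ∧ IsCompact S ∧ interior S = ∅ ∧ ∀ x ∈ S, AccPt x (Filter.principal S)

lemma integral_aux (a s : ℝ) (ha : 0 < a) (hs : 0 < s) :
    ∫ z in Set.Icc (0:ℝ) 1, (a - min a (s * z)) =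
      (if s ≤ a then a - s / 2 else a ^ 2 / (2 * s)) := by
  have hcont : Continuous fun z : ℝ => min a (s * z) :=
    continuous_const.min (continuous_const.mul continuous_id)
  have hint : IntegrableOn (fun z => min a (s * z)) (Set.Icc (0:ℝ) 1) :=
    hcont.integrableOn_Icc
  have hca : IntegrableOn (fun _ : ℝ => a) (Set.Icc (0:ℝ) 1) :=
    continuous_const.integrableOn_Icc
  rw [MeasureTheory.integral_sub hca hint, MeasureTheory.setIntegral_const,
    measureReal_def, Real.volume_Icc]
  have hvol : ((ENNReal.ofReal (1 - 0 : ℝ)).toReal : ℝ) = 1 := by norm_num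
  rw [hvol, one_smul]
  have hmin : ∫ z in Set.Icc (0:ℝ) 1, min a (s * z) = ∫ z in (0:ℝ)..1, min a (s * z) := by
    rw [MeasureTheory.integral_Icc_eq_integral_Ioc,
      intervalIntegral.integral_of_le (by norm_num : (0:ℝ) ≤ 1)]
  rw [hmin]
  by_cases hsa : s ≤ a
  · rw [if_pos hsa]
    have heq : Set.EqOn (fun z : ℝ => min a (s * z)) (fun z => s * z) (Set.uIcc 0 1) := by
      intro z hz
      rw [Set.uIcc_of_le (by norm_num : (0:ℝ) ≤ 1)] at hz
      exact min_eq_right (by nlinarith [hz.1, hz.2])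
    rw [intervalIntegral.integral_congr heq, intervalIntegral.integral_const_mul,
      integral_id]
    ring
  · rw [if_neg hsa]
    push_neg at hsa
    set c : ℝ := a / s with hc
    have hc0 : 0 < c := div_pos ha hs
    have hc1 : c < 1 := (div_lt_one hs).2 hsa
    have hsc : s * c = a := by rw [hc]; field_simp
    have h1 : IntervalIntegrable (fun z : ℝ => min a (s * z)) volume 0 c :=
      hcont.intervalIntegrable _ _
    have h2 : IntervalIntegrable (fun z : ℝ => min a (s * z)) volume c 1 :=
      hcont.intervalIntegrable _ _
    rw [← intervalIntegral.integral_add_adjacent_intervals h1 h2]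
    have e1 : ∫ z in (0:ℝ)..c, min a (s * z) = s * (c ^ 2 - 0 ^ 2) / 2 := by
      have heq : Set.EqOn (fun z : ℝ => min a (s * z)) (fun z => s * z) (Set.uIcc 0 c) := by
        intro z hz
        rw [Set.uIcc_of_le hc0.le] at hz
        exact min_eq_right (by nlinarith [hz.1, hz.2])
      rw [intervalIntegral.integral_congr heq, intervalIntegral.integral_const_mul,
        integral_id]
      ring
    have e2 : ∫ z in c..(1:ℝ), min a (s * z) = (1 - c) * a := by
      have heq : Set.EqOn (fun z : ℝ => min a (s * z)) (fun _ => a) (Set.uIcc c 1) := by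
        intro z hz
        rw [Set.uIcc_of_le hc1.le] at hz
        exact min_eq_left (by nlinarith [hz.1, hz.2])
      rw [intervalIntegral.integral_congr heq, intervalIntegral.integral_const, smul_eq_mul]
    rw [e1, e2, hc]
    field_simp
    ring

lemma summable_tail {d : ℕ → ℝ} (hsum : Summable d) (m : ℕ) :
    Summable (fun i => d (m + i)) :=
  hsum.comp_injective (fun a b h => by omega)

lemma tail_succ {d : ℕ → ℝ} (hsum : Summable d) (m : ℕ) :
    (∑' i, d (m + i)) = d m + ∑' i, d (m + 1 + i) := by
  rw [Summable.tsum_eq_zero_add (summable_tail hsum m)]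
  have h : ∀ i, d (m + (i + 1)) = d (m + 1 + i) := fun i => by congr 1; omega
  simp only [h, Nat.add_zero]

lemma tail_tendsto {d : ℕ → ℝ} (hsum : Summable d) :
    Tendsto (fun m => ∑' i, d (m + i)) atTop (nhds 0) := by
  have := tendsto_sum_nat_add d
  refine this.congr fun m => tsum_congr fun k => by congr 1; omega

lemma greedy (d : ℕ → ℝ) (hd : ∀ j, 0 ≤ d j) (hsum : Summable d)
    (hdom : ∀ j, d j ≤ ∑' i, d (j + 1 + i)) (y : ℝ) (hy0 : 0 ≤ y) (hy1 : y ≤ ∑' i, d i) :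
    ∃ η : ℕ → Fin 2, ∑' j, ((η j : ℕ) : ℝ) * d j = y := by
  set tail : ℕ → ℝ := fun m => ∑' i, d (m + i) with htail
  set p : ℕ → ℝ := fun n => Nat.rec 0 (fun k acc => if acc + d k ≤ y then acc + d k else acc) n with hp
  have hp0 : p 0 = 0 := rfl
  have hpsucc : ∀ n, p (n + 1) = if p n + d n ≤ y then p n + d n else p n := fun n => rfl
  set η : ℕ → Fin 2 := fun n => if p n + d n ≤ y then 1 else 0 with hη
  have hinv : ∀ n, p n ≤ y ∧ y ≤ p n + tail n := by
    intro n
    induction n with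
    | zero =>
      refine ⟨by rw [hp0]; exact hy0, ?_⟩
      rw [hp0, zero_add]
      simpa [htail] using hy1
    | succ n ih =>
      rcases ih with ⟨ih1, ih2⟩
      have hts : tail n = d n + tail (n + 1) := tail_succ hsum n
      by_cases hc : p n + d n ≤ y
      · rw [hpsucc, if_pos hc]
        exact ⟨hc, by rw [hts] at ih2; linarith⟩
      · rw [hpsucc, if_neg hc]
        push_neg at hc
        have := hdom n
        exact ⟨ih1, by simp only [htail] at this ⊢; linarith⟩
  have hpsum : ∀ n, p n = ∑ j ∈ Finset.range n, ((η j : ℕ) : ℝ) * d j := by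
    intro n
    induction n with
    | zero => simp [hp0]
    | succ n ih =>
      rw [Finset.sum_range_succ, ← ih, hpsucc, hη]
      by_cases hc : p n + d n ≤ y
      · simp [hc]
      · simp [hc]
  have htail0 : Tendsto tail atTop (nhds 0) := tail_tendsto hsum
  have hplim : Tendsto p atTop (nhds y) := by
    have hlow : Tendsto (fun n => y - tail n) atTop (nhds (y - 0)) :=
      tendsto_const_nhds.sub htail0
    rw [sub_zero] at hlow
    refine tendsto_of_tendsto_of_tendsto_of_le_of_le hlow tendsto_const_nhds
      (fun n => by linarith [(hinv n).2]) (fun n => (hinv n).1)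
  refine ⟨η, ?_⟩
  have hsη : Summable fun j => ((η j : ℕ) : ℝ) * d j := by
    refine Summable.of_nonneg_of_le (fun j => mul_nonneg (by positivity) (hd j)) (fun j => ?_) hsum
    exact mul_le_of_le_one_left (hd j) (by exact_mod_cast Fin.is_le (η j))
  have h1 := hsη.hasSum.tendsto_sum_nat
  have h2 : Tendsto (fun n => ∑ j ∈ Finset.range n, ((η j : ℕ) : ℝ) * d j) atTop (nhds y) := by
    refine hplim.congr fun n => hpsum n
  exact tendsto_nhds_unique h1 h2

namespace Luroth

variable {t : ℕ → ℝ} (ht : IsLurothSeq t)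

/-- `a n = t (n+1) - t (n+2)` -/
def aa (t : ℕ → ℝ) (n : ℕ) : ℝ := t (n + 1) - t (n + 2)

/-- `s n e = t (n + 2 - e)` -/
def ss (t : ℕ → ℝ) (n : ℕ) (e : Fin 2) : ℝ := t (n + 2 - (e : ℕ))

noncomputable def hh (t : ℕ → ℝ) (n : ℕ) (e : Fin 2) : ℝ :=
  if ss t n e ≤ aa t n then aa t n - ss t n e / 2 else (aa t n) ^ 2 / (2 * ss t n e)

include ht

lemma aa_pos (n : ℕ) : 0 < aa t n := by
  have := ht.anti (n + 1) (by omega)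
  unfold aa; linarith

lemma ss_pos (n : ℕ) (e : Fin 2) : 0 < ss t n e := by
  have he : (e : ℕ) ≤ 1 := Fin.is_le e
  exact ht.pos _ (by omega)

lemma hasSum_aa : HasSum (aa t) 1 := by
  rw [hasSum_iff_tendsto_nat_of_nonneg (fun n => (aa_pos ht n).le)]
  have hps : ∀ n, ∑ i ∈ Finset.range n, aa t i = t 1 - t (n + 1) := by
    intro n
    have := Finset.sum_range_sub' (fun i => t (i + 1)) n
    simpa [aa] using this
  simp only [hps, ht.t_one]
  have : Tendsto (fun n : ℕ => t (n + 1)) atTop (nhds 0) :=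
    ht.tendsto_zero.comp (tendsto_add_atTop_nat 1)
  have h2 : Tendsto (fun n : ℕ => 1 - t (n + 1)) atTop (nhds (1 - 0)) :=
    tendsto_const_nhds.sub this
  simpa using h2

lemma summable_aa : Summable (aa t) := (hasSum_aa ht).summable

lemma tsum_aa : ∑' n, aa t n = 1 := (hasSum_aa ht).tsum_eq

lemma phi_eq (n : ℕ) (e : Fin 2) (z : ℝ) :
    (if aa t n / ss t n e < z then aa t n else ss t n e * z) = min (aa t n) (ss t n e * z) := by
  have hs := ss_pos ht n e
  by_cases h : aa t n / ss t n e < z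
  · rw [if_pos h, eq_comm]
    exact min_eq_left (by nlinarith [(div_lt_iff₀ hs).1 h])
  · rw [if_neg h, eq_comm]
    push_neg at h
    exact min_eq_right (by nlinarith [(le_div_iff₀ hs).1 h])

lemma F_eq (ε : ℕ → Fin 2) (z : ℝ) :
    F t ε z = ∑' n, min (aa t n) (ss t n (ε n) * z) := by
  unfold F
  exact tsum_congr fun n => phi_eq ht n (ε n) z

lemma hh_nonneg (n : ℕ) (e : Fin 2) : 0 ≤ hh t n e := by
  have ha := aa_pos ht n
  have hs := ss_pos ht n e
  unfold hh
  split
  · linarith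
  · positivity

lemma hh_le_aa (n : ℕ) (e : Fin 2) : hh t n e ≤ aa t n := by
  have ha := aa_pos ht n
  have hs := ss_pos ht n e
  unfold hh
  split
  · linarith
  · rename_i h
    push_neg at h
    rw [div_le_iff₀ (by positivity)]
    nlinarith

lemma summable_hh (ε : ℕ → Fin 2) : Summable (fun n => hh t n (ε n)) :=
  Summable.of_nonneg_of_le (fun n => hh_nonneg ht n (ε n)) (fun n => hh_le_aa ht n (ε n))
    (summable_aa ht)

lemma Mavg_eq (ε : ℕ → Fin 2) : Mavg t ε = ∑' n, hh t n (ε n) := by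
  set g : ℕ → ℝ → ℝ := fun n z => aa t n - min (aa t n) (ss t n (ε n) * z) with hg
  have hgcont : ∀ n, Continuous (g n) := fun n =>
    continuous_const.sub (continuous_const.min (continuous_const.mul continuous_id))
  have hgint : ∀ n, Integrable (g n) (volume.restrict (Set.Icc (0:ℝ) 1)) := fun n =>
    (hgcont n).integrableOn_Icc
  have hgbound : ∀ n, ∀ z ∈ Set.Icc (0:ℝ) 1, ‖g n z‖ ≤ aa t n := by
    intro n z hz
    have ha := aa_pos ht n
    have hs := ss_pos ht n (ε n)
    have h1 : min (aa t n) (ss t n (ε n) * z) ≤ aa t n := min_le_left _ _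
    have h2 : 0 ≤ min (aa t n) (ss t n (ε n) * z) :=
      le_min ha.le (by nlinarith [hz.1])
    rw [Real.norm_eq_abs, abs_le]
    constructor <;> simp only [hg] <;> linarith
  have hnorm : ∀ n, ∫ z in Set.Icc (0:ℝ) 1, ‖g n z‖ ≤ aa t n := by
    intro n
    calc ∫ z in Set.Icc (0:ℝ) 1, ‖g n z‖ ≤ ∫ _z in Set.Icc (0:ℝ) 1, aa t n := by
          refine setIntegral_mono_on (hgint n).norm continuous_const.integrableOn_Icc
            measurableSet_Icc (hgbound n)
      _ = aa t n := by
          rw [MeasureTheory.setIntegral_const, measureReal_def, Real.volume_Icc]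
          norm_num
  have hsumnorm : Summable fun n => ∫ z in Set.Icc (0:ℝ) 1, ‖g n z‖ := by
    refine Summable.of_nonneg_of_le (fun n => ?_) hnorm (summable_aa ht)
    positivity
  have hswap := MeasureTheory.integral_tsum_of_summable_integral_norm hgint hsumnorm
  have hpt : Set.EqOn (fun z => 1 - F t ε z) (fun z => ∑' n, g n z) (Set.Icc (0:ℝ) 1) := by
    intro z hz
    have hsumm : Summable fun n => min (aa t n) (ss t n (ε n) * z) := by
      refine Summable.of_nonneg_of_le (fun n => ?_) (fun n => min_le_left _ _) (summable_aa ht)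
      exact le_min (aa_pos ht n).le (by nlinarith [hz.1, (ss_pos ht n (ε n))])
    simp only [hg]
    rw [Summable.tsum_sub (summable_aa ht) hsumm, tsum_aa ht, F_eq ht ε z]
  unfold Mavg
  rw [MeasureTheory.setIntegral_congr_fun measurableSet_Icc hpt, ← hswap]
  refine tsum_congr fun n => ?_
  simp only [hg]
  rw [integral_aux _ _ (aa_pos ht n) (ss_pos ht n (ε n))]
  rfl


omit ht in
lemma ss_zero (n : ℕ) : ss t n 0 = t (n + 2) := by simp [ss]
omit ht in
lemma ss_one (n : ℕ) : ss t n 1 = t (n + 1) := by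
  show t (n + 2 - ((1 : Fin 2) : ℕ)) = t (n + 1)
  norm_num

lemma hh_one (n : ℕ) : hh t n 1 = (aa t n) ^ 2 / (2 * t (n + 1)) := by
  have h2 := ht.pos (n + 2) (by omega)
  rw [hh, ss_one, if_neg (by unfold aa; linarith)]

lemma gseq_eq (n : ℕ) : gseq t (n + 1) = hh t n 0 - hh t n 1 := by
  have h1 := ht.pos (n + 1) (by omega)
  have h2 := ht.pos (n + 2) (by omega)
  have h3 := ht.anti (n + 1) (by omega)
  have e12 : n + 1 + 1 = n + 2 := rfl
  rw [hh_one ht, hh, ss_zero, gseq, e12]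
  by_cases hc : t (n + 2) / t (n + 1) ≤ 1 / 2
  · have hc' : t (n + 2) ≤ aa t n := by
      rw [div_le_iff₀ h1] at hc; unfold aa; linarith
    rw [if_pos hc, if_pos hc']
    unfold aa
    field_simp
    ring
  · have hc2 : t (n + 1) < 2 * t (n + 2) := by
      push_neg at hc
      have := (lt_div_iff₀ h1).1 hc; linarith
    have hc' : ¬ (t (n + 2) ≤ aa t n) := by unfold aa; push_neg; linarith
    rw [if_neg hc, if_neg hc']
    unfold aa
    field_simp
    ring

lemma hh_one_le_zero (n : ℕ) : hh t n 1 ≤ hh t n 0 := by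
  have h1 := ht.pos (n + 1) (by omega)
  have h2 := ht.pos (n + 2) (by omega)
  have h3 := ht.anti (n + 1) (by omega)
  have ha := aa_pos ht n
  have haux : aa t n < t (n + 1) := by unfold aa; linarith
  rw [hh_one ht, hh, ss_zero]
  by_cases hc : t (n + 2) ≤ aa t n
  · rw [if_pos hc]
    rw [div_le_iff₀ (by positivity)]
    nlinarith
  · rw [if_neg hc]
    push_neg at hc
    have := div_le_div_of_nonneg_left (sq_nonneg (aa t n)) (by positivity : (0:ℝ) < 2 * t (n + 2)) (by linarith : 2 * t (n + 2) ≤ 2 * t (n + 1))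
    exact this


omit ht in
lemma cc_summable_aux : True := trivial

/-- `c n = gseq t (n+1) = hh n 0 - hh n 1`. -/
noncomputable def cc (t : ℕ → ℝ) (n : ℕ) : ℝ := gseq t (n + 1)

lemma cc_eq (n : ℕ) : cc t n = hh t n 0 - hh t n 1 := gseq_eq ht n

lemma cc_nonneg (n : ℕ) : 0 ≤ cc t n := by
  rw [cc_eq ht]; linarith [hh_one_le_zero ht n]

lemma cc_le_aa (n : ℕ) : cc t n ≤ aa t n := by
  rw [cc_eq ht]
  linarith [hh_nonneg ht n 1, hh_le_aa ht n 0]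

lemma summable_cc : Summable (cc t) :=
  Summable.of_nonneg_of_le (cc_nonneg ht) (cc_le_aa ht) (summable_aa ht)

lemma summable_T (ε : ℕ → Fin 2) : Summable (fun n => ((ε n : ℕ) : ℝ) * cc t n) :=
  Summable.of_nonneg_of_le
    (fun n => mul_nonneg (by positivity) (cc_nonneg ht n))
    (fun n => mul_le_of_le_one_left (cc_nonneg ht n) (by exact_mod_cast Fin.is_le (ε n)))
    (summable_cc ht)

lemma hh_cases (n : ℕ) (e : Fin 2) : hh t n e = hh t n 0 - ((e : ℕ) : ℝ) * cc t n := by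
  fin_cases e
  · simp
  · rw [cc_eq ht]
    norm_num

lemma Mavg_repr (ε : ℕ → Fin 2) :
    Mavg t ε = (∑' n, hh t n 0) - ∑' n, ((ε n : ℕ) : ℝ) * cc t n := by
  rw [Mavg_eq ht]
  rw [tsum_congr (fun n => hh_cases ht n (ε n))]
  exact Summable.tsum_sub (summable_hh ht (fun _ => 0)) (summable_T ht ε)

end Luroth


open Luroth in
/-- If `G(n) ≤ 0` for all `n ≥ N` then `𝓜 = ∪_{ω ∈ {0,1}^N} I_ω`;
in particular `𝓜` is a finite union of closed intervals. -/
theorem calM_union_of_G_nonpos (t : ℕ → ℝ) (ht : IsLurothSeq t)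
    (N : ℕ) (hG : ∀ n, N ≤ n → Gseq t n ≤ 0) :
    calM t = ⋃ w : Fin N → Fin 2, Iword t w := by
  classical
  set S : ℝ := ∑' n, hh t n 0 with hS
  -- basic facts about `cat`
  have cat_lt : ∀ (w : Fin N → Fin 2) (η : ℕ → Fin 2) (i : ℕ) (h : i < N),
      cat w η i = w ⟨i, h⟩ := by
    intro w η i h; simp [cat, h]
  have cat_add : ∀ (w : Fin N → Fin 2) (η : ℕ → Fin 2) (i : ℕ),
      cat w η (i + N) = η i := by
    intro w η i
    simp only [cat]
    rw [dif_neg (by omega)]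
    congr 1; omega
  -- splitting of the T-sum
  have Tsplit : ∀ ε : ℕ → Fin 2,
      (∑' n, ((ε n : ℕ) : ℝ) * cc t n) =
        (∑ i ∈ Finset.range N, ((ε i : ℕ) : ℝ) * cc t i)
          + ∑' i, ((ε (i + N) : ℕ) : ℝ) * cc t (i + N) :=
    fun ε => ((summable_T ht ε).sum_add_tsum_nat_add N).symm
  have summable_tail_cc : Summable fun i => cc t (i + N) :=
    (summable_nat_add_iff N).mpr (summable_cc ht)
  set R : ℝ := ∑' i, cc t (i + N) with hR
  have hR0 : 0 ≤ R := tsum_nonneg fun i => cc_nonneg ht _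
  -- head sum only depends on w
  have head_eq : ∀ (w : Fin N → Fin 2) (η η' : ℕ → Fin 2),
      (∑ i ∈ Finset.range N, ((cat w η i : ℕ) : ℝ) * cc t i)
        = ∑ i ∈ Finset.range N, ((cat w η' i : ℕ) : ℝ) * cc t i := by
    intro w η η'
    refine Finset.sum_congr rfl fun i hi => ?_
    have h := Finset.mem_range.1 hi
    rw [cat_lt w η i h, cat_lt w η' i h]
  -- values at the endpoints
  have endpoint0 : ∀ w : Fin N → Fin 2,
      Mavg t (cat w fun _ => 0)
        = S - ∑ i ∈ Finset.range N, ((cat w (fun _ => 0) i : ℕ) : ℝ) * cc t i := by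
    intro w
    rw [Mavg_repr ht, Tsplit]
    have : (∑' i, ((cat w (fun _ => (0:Fin 2)) (i + N) : ℕ) : ℝ) * cc t (i + N)) = 0 := by
      convert tsum_zero with i
      rw [cat_add]; simp
    rw [this, add_zero]
  have endpoint1 : ∀ w : Fin N → Fin 2,
      Mavg t (cat w fun _ => 1)
        = S - ((∑ i ∈ Finset.range N, ((cat w (fun _ => (0:Fin 2)) i : ℕ) : ℝ) * cc t i) + R) := by
    intro w
    rw [Mavg_repr ht, Tsplit, head_eq w (fun _ => 1) (fun _ => 0)]
    have : (∑' i, ((cat w (fun _ => (1:Fin 2)) (i + N) : ℕ) : ℝ) * cc t (i + N)) = R := by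
      refine tsum_congr fun i => ?_
      rw [cat_add]
      norm_num
    rw [this]
  ext x
  simp only [calM, Set.mem_range, Set.mem_iUnion, Iword, Set.mem_Icc]
  constructor
  · rintro ⟨ε, rfl⟩
    refine ⟨fun i => ε i, ?_, ?_⟩
    · rw [endpoint1, Mavg_repr ht, Tsplit]
      have hhead : (∑ i ∈ Finset.range N, ((cat (fun i : Fin N => ε i) (fun _ => (0:Fin 2)) i : ℕ) : ℝ) * cc t i)
          = ∑ i ∈ Finset.range N, ((ε i : ℕ) : ℝ) * cc t i := by
        refine Finset.sum_congr rfl fun i hi => ?_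
        rw [cat_lt _ _ i (Finset.mem_range.1 hi)]
      have htail : (∑' i, ((ε (i + N) : ℕ) : ℝ) * cc t (i + N)) ≤ R := by
        refine Summable.tsum_le_tsum (fun i => mul_le_of_le_one_left (cc_nonneg ht _)
          (by exact_mod_cast Fin.is_le _)) ?_ summable_tail_cc
        exact Summable.of_nonneg_of_le (fun i => mul_nonneg (by positivity) (cc_nonneg ht _))
          (fun i => mul_le_of_le_one_left (cc_nonneg ht _) (by exact_mod_cast Fin.is_le _))
          summable_tail_cc
      rw [hhead]
      linarith
    · rw [endpoint0, Mavg_repr ht, Tsplit]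
      have hhead : (∑ i ∈ Finset.range N, ((cat (fun i : Fin N => ε i) (fun _ => (0:Fin 2)) i : ℕ) : ℝ) * cc t i)
          = ∑ i ∈ Finset.range N, ((ε i : ℕ) : ℝ) * cc t i := by
        refine Finset.sum_congr rfl fun i hi => ?_
        rw [cat_lt _ _ i (Finset.mem_range.1 hi)]
      have htail : 0 ≤ ∑' i, ((ε (i + N) : ℕ) : ℝ) * cc t (i + N) :=
        tsum_nonneg fun i => mul_nonneg (by positivity) (cc_nonneg ht _)
      rw [hhead]
      linarith
  · rintro ⟨w, h1, h2⟩
    rw [endpoint1] at h1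
    rw [endpoint0] at h2
    set Pw : ℝ := ∑ i ∈ Finset.range N, ((cat w (fun _ => (0:Fin 2)) i : ℕ) : ℝ) * cc t i with hPw
    -- apply the greedy lemma to d i = cc (i + N) and y = (S - Pw) - x
    have hdom : ∀ j, cc t (j + N) ≤ ∑' i, cc t (j + 1 + i + N) := by
      intro j
      have hg := hG (N + j) (by omega)
      rw [Gseq, sub_nonpos] at hg
      have e1 : cc t (j + N) = gseq t (N + j + 1) := by
        show gseq t (j + N + 1) = gseq t (N + j + 1)
        congr 1; omega
      have e2 : (∑' k, gseq t (N + j + 2 + k)) = ∑' i, cc t (j + 1 + i + N) := by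
        refine tsum_congr fun k => ?_
        show gseq t (N + j + 2 + k) = gseq t (j + 1 + k + N + 1)
        congr 1; omega
      rw [e1, ← e2]
      exact hg
    have hy : 0 ≤ (S - Pw) - x ∧ (S - Pw) - x ≤ R := by
      constructor <;> linarith
    obtain ⟨η, hη⟩ := greedy (fun i => cc t (i + N))
      (fun i => cc_nonneg ht _) summable_tail_cc
      hdom
      ((S - Pw) - x) hy.1 hy.2
    refine ⟨cat w η, ?_⟩
    rw [Mavg_repr ht, Tsplit, head_eq w η (fun _ => 0), ← hPw]
    have htail : (∑' i, ((cat w η (i + N) : ℕ) : ℝ) * cc t (i + N)) = (S - Pw) - x := by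
      rw [← hη]
      exact tsum_congr fun i => by rw [cat_add]
    rw [htail]
    ring
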